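/- For all positive integers n and k, det(C_{n+i+j})_{i,j=0}^{k-1} = det(C(k+i+j, 2j))_{i,j=0}^{n-1}, where the left matrix is k×k with entries Catalan numbers and the right matrix is n×n with binomial entries. -/

import Mathlib

/-!
Let `B = (C(2r, r+c) - C(2r, r+c+1))_{r,c}` be the ballot (Catalan triangle) matrix; it is lower
unitriangular, its column `0` is the Catalan sequence, and its inverse is
`((-1)^(r+c) C(r+c, 2c))_{r,c}`. Row `q + 1` of `B` is row `q` times `D Dᵀ`, with `D` the upper
bidiagonal matrix of ones; by this symmetry the products `∑_l B(p,l) B(q,l)` depend only on `p + q`,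
hence equal `C_{p+q}`. So the Hankel matrix
`(C_{n+i+j})` is the `k × k` minor of `B` on rows `n, …, n+k-1` and columns `0, …, k-1`, times a
unitriangular matrix. Jacobi's complementary minor identity for `B` (of size `n + k`, determinant
`1`) turns this minor into the complementary `n × n` minor of `B⁻¹`, rows `k, …, k+n-1` and columns
`0, …, n-1`, which is `((-1)^(k+i+j) C(k+i+j, 2j))`. The two signs `(-1)^(nk)`, from the entries and
from moving the blocks into place, cancel.
-/

open Finset

lemma Nat.choose_add_two_add_two (m j : ℕ) :
    (m + 2).choose (j + 2) = m.choose j + 2 * m.choose (j + 1) + m.choose (j + 2) := by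
  simp only [Nat.choose_succ_succ]
  ring

lemma sum_neg_one_pow_mul_choose_mul_choose_add (M A : ℕ) :
    ∑ d ∈ range (M + 1), (-1 : ℤ) ^ (M - d) * M.choose d * (d + A).choose M = 1 := by
  have hdiff := fwdDiff_iter_eq_sum_shift (h := 1) (fun x : ℕ => (x.choose (M + 0) : ℤ)) M A
  rw [fwdDiff_iter_choose 0 M] at hdiff
  simpa [add_comm A] using hdiff.symm

namespace Matrix

variable {R ι κ m k : Type*} [CommRing R]

-- Jacobi's complementary minor identity.
lemma det_toBlocks₁₁_of_mul_eq_one [Fintype m] [Fintype k] [DecidableEq m] [DecidableEq k]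
    {M W : Matrix (m ⊕ k) (m ⊕ k) R} (h : M * W = 1) :
    M.toBlocks₁₁.det = M.det * W.toBlocks₂₂.det := by
  have hcol : M * fromBlocks 1 W.toBlocks₁₂ 0 W.toBlocks₂₂ =
      fromBlocks M.toBlocks₁₁ 0 M.toBlocks₂₁ 1 := by
    have hMW := congrArg (fun X => (X.toBlocks₁₂, X.toBlocks₂₂)) h
    rw [← fromBlocks_toBlocks M, ← fromBlocks_toBlocks W, fromBlocks_multiply,
      ← fromBlocks_one] at hMW
    simp only [toBlocks_fromBlocks₁₂, toBlocks_fromBlocks₂₂, Prod.mk.injEq] at hMW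
    rw [← fromBlocks_toBlocks M, fromBlocks_multiply, hMW.1, hMW.2]
    simp
  simpa [det_fromBlocks_zero₂₁, det_fromBlocks_zero₁₂] using (congrArg det hcol).symm

lemma det_submatrix_equiv_equiv [Fintype ι] [DecidableEq ι] [Fintype κ] [DecidableEq κ]
    (e₁ e₂ : κ ≃ ι) (A : Matrix ι ι R) :
    (A.submatrix e₁ e₂).det = Equiv.Perm.sign (e₁.symm.trans e₂) * A.det := by
  rw [← det_permute', ← det_submatrix_equiv_self e₁]
  congr 1
  ext i j
  simp

lemma det_of_neg_one_pow_add_add_mul {n : ℕ} (A : Fin n → Fin n → R) (m : ℕ) :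
    (of fun i j : Fin n => (-1) ^ (m + i.1 + j.1) * A i j).det = (-1) ^ (n * m) * (of A).det := by
  have hsplit : (of fun i j : Fin n => (-1 : R) ^ (m + i.1 + j.1) * A i j) =
      of fun i j => (-1) ^ (m + i.1) * (of fun i j : Fin n => (-1) ^ j.1 * of A i j) i j := by
    ext i j
    simp only [of_apply, pow_add]
    ring
  rw [hsplit, det_mul_column, det_mul_row, ← mul_assoc, ← prod_mul_distrib]
  congr 1
  simp [pow_add, mul_assoc, ← mul_pow, ← pow_mul, mul_comm m n]

end Matrix

lemma Equiv.Perm.sign_finCycle {N : ℕ} (j : Fin N) :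
    Equiv.Perm.sign (finCycle j) = (-1) ^ ((N - 1) * j.1) := by
  have hpow : finCycle j = finRotate N ^ j.1 := by
    ext1 i
    rw [Equiv.Perm.coe_pow, finCycle_eq_finRotate_iterate]
  rw [hpow, map_pow, sign_finRotate, pow_mul]

def ballot (r c : ℕ) : ℤ := (2 * r).choose (r + c) - (2 * r).choose (r + c + 1)

lemma ballot_eq_zero_of_lt {r c : ℕ} (h : r < c) : ballot r c = 0 := by
  simp [ballot, Nat.choose_eq_zero_of_lt, show 2 * r < r + c by omega,
    show 2 * r < r + c + 1 by omega]

lemma ballot_self (r : ℕ) : ballot r r = 1 := by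
  simp [ballot, ← two_mul]

lemma ballot_zero_right (r : ℕ) : ballot r 0 = catalan r := by
  have hcat : ((r + 1) * catalan r : ℤ) = (2 * r).choose r := by
    exact_mod_cast succ_mul_catalan_eq_centralBinom r
  have hsucc : ((2 * r).choose (r + 1) * (r + 1) : ℤ) = (2 * r).choose r * r := by
    exact_mod_cast (Nat.choose_succ_right_eq (2 * r) r).trans (by rw [show 2 * r - r = r by omega])
  refine mul_left_cancel₀ (show (r + 1 : ℤ) ≠ 0 by positivity) ?_
  rw [ballot, hcat]
  linear_combination -hsucc

lemma ballot_succ_succ (r c : ℕ) :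
    ballot (r + 1) (c + 1) = ballot r c + 2 * ballot r (c + 1) + ballot r (c + 2) := by
  simp only [ballot, show 2 * (r + 1) = 2 * r + 2 by ring,
    show r + 1 + (c + 1) = r + c + 2 by ring, show r + c + 2 + 1 = r + c + 1 + 2 by ring,
    Nat.choose_add_two_add_two]
  push_cast
  ring_nf

lemma ballot_succ_zero (r : ℕ) : ballot (r + 1) 0 = ballot r 0 + ballot r 1 := by
  simp only [ballot, add_zero, show 2 * (r + 1) = 2 * r + 1 + 1 by ring,
    Nat.choose_succ_succ (2 * r + 1) r, ← Nat.choose_symm_half r,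
    Nat.choose_succ_succ (2 * r + 1) (r + 1), Nat.choose_succ_succ (2 * r) r,
    Nat.choose_succ_succ (2 * r) (r + 1)]
  push_cast
  ring

lemma sum_range_mul_ballot (x : ℕ → ℤ) {q L : ℕ} (hq : q < L) :
    ∑ l ∈ range L, x l * ballot q l = ∑ l ∈ range (q + 1), x l * ballot q l := by
  refine (sum_subset (range_subset_range.mpr hq) fun l _ hl => ?_).symm
  rw [ballot_eq_zero_of_lt (by simpa using hl), mul_zero]

lemma sum_mul_ballot_succ (x : ℕ → ℤ) {q L : ℕ} (hq : q < L) :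
    ∑ l ∈ range (L + 1), x l * ballot (q + 1) l =
      ∑ l ∈ range (L + 1), (x l + x (l + 1)) * (ballot q l + ballot q (l + 1)) := by
  have htop : ballot q L + ballot q (L + 1) = 0 := by
    rw [ballot_eq_zero_of_lt hq, ballot_eq_zero_of_lt (by omega), add_zero]
  simp only [add_mul, sum_add_distrib]
  rw [sum_range_succ', sum_range_succ' (fun l => x l * _), sum_range_succ (fun l => x (l + 1) * _),
    htop, mul_zero, add_zero, ballot_succ_zero, zero_add, add_right_comm, ← sum_add_distrib]
  simp only [ballot_succ_succ]
  congr 1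
  exact sum_congr rfl fun l _ => by ring

lemma sum_ballot_mul_ballot (p : ℕ) {q L : ℕ} (hq : q < L) :
    ∑ l ∈ range L, ballot p l * ballot q l = catalan (p + q) := by
  have key : ∀ q p, ∑ l ∈ range (p + q + 1), ballot p l * ballot q l = catalan (p + q) := by
    intro q
    induction q with
    | zero =>
      intro p
      rw [sum_range_mul_ballot _ (by omega), sum_range_one, ballot_self, mul_one, ballot_zero_right]
      rfl
    | succ q ih =>
      intro p
      calc ∑ l ∈ range (p + q + 1 + 1), ballot p l * ballot (q + 1) l
          = ∑ l ∈ range (p + q + 1 + 1), ballot q l * ballot (p + 1) l := by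
            rw [sum_mul_ballot_succ _ (by omega),
              sum_mul_ballot_succ _ (show p < p + q + 1 by omega)]
            exact sum_congr rfl fun l _ => mul_comm _ _
        _ = catalan (p + (q + 1)) := by
            simp_rw [mul_comm (ballot q _)]
            rw [show p + q + 1 + 1 = p + 1 + q + 1 by ring, ih,
              show p + 1 + q = p + (q + 1) by ring]
  rw [sum_range_mul_ballot _ hq, ← sum_range_mul_ballot _ (show q < p + q + 1 by omega), key]

lemma sum_signed_choose_mul_choose (r s : ℕ) :
    ∑ c ∈ range (r + 1), (-1 : ℤ) ^ (r + c) * (r + c).choose (2 * c) * (2 * c).choose (c + s) =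
      if s ≤ r then 1 else 0 := by
  split_ifs with hsr
  · obtain ⟨m, rfl⟩ := Nat.exists_eq_add_of_le hsr
    rw [show s + m + 1 = s + (m + 1) by ring, sum_range_add, sum_eq_zero fun c hc => ?_, zero_add]
    · refine (sum_congr rfl fun d hd => ?_).trans
        (sum_neg_one_pow_mul_choose_mul_choose_add m (2 * s + m))
      have hdm : d ≤ m := by simpa [Nat.lt_succ_iff] using hd
      have hprod : (s + m + (s + d)).choose (2 * (s + d)) * (2 * (s + d)).choose (s + d + s) =
          m.choose d * (d + (2 * s + m)).choose m := by
        rw [Nat.choose_mul (by omega), mul_comm, show s + m + (s + d) - (s + d + s) = m by omega,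
          show 2 * (s + d) - (s + d + s) = d by omega,
          show s + m + (s + d) = (s + d + s) + m by ring,
          Nat.choose_symm_add, show s + d + s + m = d + (2 * s + m) by ring]
      rw [mul_assoc, ← Nat.cast_mul, hprod, Nat.cast_mul, ← mul_assoc]
      congr 1
      rw [show s + m + (s + d) = m - d + 2 * (s + d) by omega, pow_add, pow_mul]
      simp
    · rw [Nat.choose_eq_zero_of_lt (n := 2 * c) (by simp at hc; omega)]
      simp
  · refine sum_eq_zero fun c hc => ?_
    rw [Nat.choose_eq_zero_of_lt (n := 2 * c) (by simp at hc; omega)]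
    simp

lemma sum_signed_choose_mul_ballot {r N : ℕ} (hr : r < N) (s : ℕ) :
    ∑ c ∈ range N, (-1 : ℤ) ^ (r + c) * (r + c).choose (2 * c) * ballot c s =
      if r = s then 1 else 0 := by
  rw [← sum_subset (range_subset_range.mpr hr) fun c _ hc => ?_]
  · simp only [ballot, mul_sub, sum_sub_distrib, add_assoc, sum_signed_choose_mul_choose]
    split_ifs <;> omega
  · rw [Nat.choose_eq_zero_of_lt (by simp at hc; omega)]
    simp

def ballotMatrix (N : ℕ) : Matrix (Fin N) (Fin N) ℤ := Matrix.of fun r c => ballot r c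

def signedChooseMatrix (N : ℕ) : Matrix (Fin N) (Fin N) ℤ :=
  Matrix.of fun r c => (-1) ^ (r.1 + c.1) * (r.1 + c.1).choose (2 * c.1)

lemma det_ballotMatrix (N : ℕ) : (ballotMatrix N).det = 1 := by
  rw [(ballotMatrix N).det_of_isLowerTriangular fun r c hrc => ballot_eq_zero_of_lt hrc]
  exact prod_eq_one fun r _ => ballot_self r

lemma signedChooseMatrix_mul_ballotMatrix (N : ℕ) : signedChooseMatrix N * ballotMatrix N = 1 := by
  ext r s
  simp only [Matrix.mul_apply, Matrix.one_apply, signedChooseMatrix, ballotMatrix, Matrix.of_apply]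
  rw [Fin.sum_univ_eq_sum_range
    (fun c => (-1 : ℤ) ^ (r.1 + c) * (r.1 + c).choose (2 * c) * ballot c s) N,
    sum_signed_choose_mul_ballot r.isLt]
  simp only [Fin.val_inj]

lemma ballotMatrix_mul_signedChooseMatrix (N : ℕ) : ballotMatrix N * signedChooseMatrix N = 1 :=
  mul_eq_one_comm.mp (signedChooseMatrix_mul_ballotMatrix N)

lemma det_catalan_hankel_eq_det_ballot (n k : ℕ) :
    (Matrix.of fun i j : Fin k => (catalan (n + i.1 + j.1) : ℤ)).det =
      (Matrix.of fun i j : Fin k => ballot (n + i.1) j.1).det := by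
  have hfac : (Matrix.of fun i j : Fin k => (catalan (n + i.1 + j.1) : ℤ)) =
      (Matrix.of fun i j : Fin k => ballot (n + i.1) j.1) * (ballotMatrix k).transpose := by
    ext i j
    rw [Matrix.mul_apply, Matrix.of_apply, ← sum_ballot_mul_ballot (n + i.1) j.isLt,
      ← Fin.sum_univ_eq_sum_range (fun l => ballot (n + i.1) l * ballot j.1 l)]
    rfl
  rw [hfac, Matrix.det_mul, Matrix.det_transpose, det_ballotMatrix, mul_one]

lemma sign_swap_blocks (n k : ℕ) (hn : 0 < n) :
    Equiv.Perm.sign (((Equiv.sumComm (Fin k) (Fin n)).trans finSumFinEquiv).symm.trans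
      (finSumFinEquiv.trans (finCongr (add_comm k n)))) = (-1) ^ (n * k) := by
  have hcycle : ((Equiv.sumComm (Fin k) (Fin n)).trans finSumFinEquiv).symm.trans
      (finSumFinEquiv.trans (finCongr (add_comm k n))) = finCycle ⟨k, by omega⟩ := by
    refine Equiv.ext fun y => ?_
    obtain ⟨z, rfl⟩ := ((Equiv.sumComm (Fin k) (Fin n)).trans finSumFinEquiv).surjective y
    rcases z with i | j <;> ext <;> simp [Fin.val_add]
    · rw [show n + i + k = n + k + i by ring, Nat.add_mod_left, Nat.mod_eq_of_lt (by omega)]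
    · rw [Nat.mod_eq_of_lt (by omega), add_comm]
  have hexp : (n + k - 1) * k = n * k + k * (k - 1) := by
    rcases k with _ | k
    · simp
    · rw [show n + (k + 1) - 1 = n + k by omega, Nat.add_sub_cancel]
      ring
  rw [hcycle, Equiv.Perm.sign_finCycle, hexp, pow_add, (Nat.even_mul_pred_self k).neg_one_pow,
    mul_one]

lemma det_ballot_minor_eq_det_complementary (n k : ℕ) (hn : 0 < n) :
    (Matrix.of fun i j : Fin k => ballot (n + i.1) j.1).det =
      (-1) ^ (n * k) * (Matrix.of fun i j : Fin n =>
        (-1) ^ (k + i.1 + j.1) * ((k + i.1 + j.1).choose (2 * j.1) : ℤ)).det := by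
  let ρ : Fin k ⊕ Fin n ≃ Fin (n + k) := (Equiv.sumComm _ _).trans finSumFinEquiv
  let γ : Fin k ⊕ Fin n ≃ Fin (n + k) := finSumFinEquiv.trans (finCongr (add_comm k n))
  have hA : ((ballotMatrix (n + k)).submatrix ρ γ).toBlocks₁₁ =
      Matrix.of fun i j : Fin k => ballot (n + i.1) j.1 := by
    ext i j
    simp [ρ, γ, ballotMatrix, Matrix.toBlocks₁₁]
  have hE : ((signedChooseMatrix (n + k)).submatrix γ ρ).toBlocks₂₂ =
      Matrix.of fun i j : Fin n =>
        (-1) ^ (k + i.1 + j.1) * ((k + i.1 + j.1).choose (2 * j.1) : ℤ) := by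
    ext i j
    simp [ρ, γ, signedChooseMatrix, Matrix.toBlocks₂₂, add_comm _ k]
  have hjacobi := Matrix.det_toBlocks₁₁_of_mul_eq_one
    (M := (ballotMatrix (n + k)).submatrix ρ γ) (W := (signedChooseMatrix (n + k)).submatrix γ ρ)
    (by rw [Matrix.submatrix_mul_equiv, ballotMatrix_mul_signedChooseMatrix,
      Matrix.submatrix_one_equiv])
  rw [Matrix.det_submatrix_equiv_equiv, sign_swap_blocks n k hn, det_ballotMatrix, hA, hE,
    mul_one] at hjacobi
  exact_mod_cast hjacobi

theorem stmt_9_general (n k : ℕ) (hn : 0 < n) :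
    Matrix.det (Matrix.of fun i j : Fin k => (catalan (n + i.1 + j.1) : ℤ)) =
      Matrix.det (Matrix.of fun i j : Fin n => ((k + i.1 + j.1).choose (2 * j.1) : ℤ)) := by
  rw [det_catalan_hankel_eq_det_ballot, det_ballot_minor_eq_det_complementary n k hn,
    Matrix.det_of_neg_one_pow_add_add_mul, ← mul_assoc, ← mul_pow]
  norm_num

theorem stmt_9 (n k : ℕ) (hn : 0 < n) (hk : 0 < k) :
    Matrix.det (Matrix.of fun i j : Fin k => (catalan (n + i.1 + j.1) : ℤ)) =
      Matrix.det (Matrix.of fun i j : Fin n => ((k + i.1 + j.1).choose (2 * j.1) : ℤ)) :=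
  stmt_9_general n k hn
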